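/- Let τ* minimize F(τ) = ½‖Σ_l τ_l g_l‖² over the probability simplex Δ = {τ : τ_l ≥ 0, Σ_l τ_l = 1}, where g_l ∈ ℝ^d. If the minimal value F(τ*) is nonzero, then the direction d = −Σ_l τ*_l g_l satisfies ⟨g_l, d⟩ < 0 for every l ∈ [K], i.e., d is a common descent direction for all objectives with gradients g_l. -/

import Mathlib

open Finset RealInnerProductSpace

/-!
The minimum-norm point `v` of a convex set `C` is the projection of `0` onto `C`, so the
variational inequality of the projection, `⟪0 - v, w - v⟫ ≤ 0` for `w ∈ C`, reads
`‖v‖² ≤ ⟪v, w⟫`. For MGDA, `C` is the image of the probability simplex under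
`σ ↦ ∑ σ_l g_l`, which is convex and contains every `g_l`; hence `⟪g_l, v⟫ ≥ ‖v‖² > 0`.
-/

section MinNorm

variable {F : Type*} [NormedAddCommGroup F] [InnerProductSpace ℝ F] {C : Set F} {v : F}

theorem norm_sq_le_inner_of_isMinOn_norm (hC : Convex ℝ C) (hv : v ∈ C)
    (hmin : IsMinOn (‖·‖) C v) {w : F} (hw : w ∈ C) : ‖v‖ ^ 2 ≤ ⟪v, w⟫ := by
  have : Nonempty C := ⟨⟨v, hv⟩⟩
  have hproj : ‖0 - v‖ = ⨅ w : C, ‖0 - (w : F)‖ :=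
    le_antisymm (le_ciInf fun w ↦ by simpa using hmin w.2)
      (ciInf_le (f := fun w : C ↦ ‖0 - (w : F)‖)
        ⟨0, Set.forall_mem_range.2 fun _ ↦ norm_nonneg _⟩ ⟨v, hv⟩)
  have hvar := (norm_eq_iInf_iff_real_inner_le_zero hC hv).1 hproj w hw
  rw [zero_sub, inner_neg_left, inner_sub_right, real_inner_self_eq_norm_sq] at hvar
  linarith

theorem inner_pos_of_isMinOn_norm (hC : Convex ℝ C) (hv : v ∈ C)
    (hmin : IsMinOn (‖·‖) C v) (hv₀ : v ≠ 0) {w : F} (hw : w ∈ C) : 0 < ⟪w, v⟫ := by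
  rw [real_inner_comm]
  exact (pow_pos (norm_pos_iff.2 hv₀) 2).trans_le
    (norm_sq_le_inner_of_isMinOn_norm hC hv hmin hw)

end MinNorm

/-- MGDA common descent direction: if τ* minimizes ½‖Σ τ_l g_l‖² over the
probability simplex and the minimum value is nonzero, then
d = −Σ τ*_l g_l is a strict descent direction for every objective. -/
theorem stmt_3 (K d : ℕ) (g : Fin K → EuclideanSpace ℝ (Fin d))
    (τ : Fin K → ℝ) (hnonneg : ∀ l, 0 ≤ τ l) (hsum : ∑ l, τ l = 1)
    (hmin : ∀ σ : Fin K → ℝ, (∀ l, 0 ≤ σ l) → (∑ l, σ l = 1) →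
      (1 / 2) * ‖∑ l, τ l • g l‖ ^ 2 ≤ (1 / 2) * ‖∑ l, σ l • g l‖ ^ 2)
    (hne : (1 / 2) * ‖∑ l, τ l • g l‖ ^ 2 ≠ 0) :
    ∀ l, ⟪g l, -(∑ j, τ j • g j)⟫ < 0 := by
  intro l
  set C := Fintype.linearCombination ℝ g '' stdSimplex ℝ (Fin K)
  have hC : Convex ℝ C := (convex_stdSimplex ℝ (Fin K)).linear_image _
  have hτ : ∑ j, τ j • g j ∈ C := ⟨τ, ⟨hnonneg, hsum⟩, Fintype.linearCombination_apply ..⟩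
  have hgl : g l ∈ C :=
    ⟨Pi.single l 1, single_mem_stdSimplex ℝ l, by simp⟩
  have hτmin : IsMinOn (‖·‖) C (∑ j, τ j • g j) := by
    rintro _ ⟨σ, ⟨hσ, hσsum⟩, rfl⟩
    have hle := hmin σ hσ hσsum
    rw [Fintype.linearCombination_apply]
    exact (pow_le_pow_iff_left₀ (norm_nonneg _) (norm_nonneg _) two_ne_zero).1 (by linarith)
  have hτ₀ : ∑ j, τ j • g j ≠ 0 := fun h ↦ hne (by simp [h])
  rw [inner_neg_right, neg_lt_zero]
  exact inner_pos_of_isMinOn_norm hC hτ hτmin hτ₀ hgl
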